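/- arXiv:0802.0855 — 8 statements merged into one kernel-verified Lean document; each statement's English description precedes it below -/
import Mathlib

section
/- For any finite sequence x_1,...,x_m of vectors in C^n and any integer k ≥ 1, the inequality binom(n+k-1, k) · Σ_{i,j} |⟨x_i, x_j⟩|^{2k} ≥ (Σ_i ⟨x_i, x_i⟩^k)^2 holds. -/
/-!
The map `x ↦ x ^ ⊗ k` into the `k`-th symmetric power of `ℂⁿ`, a space of dimension
`(n + k - 1).choose k`, turns inner products `⟪x, y⟫` into `⟪x, y⟫ ^ k`, so it suffices to prove
the case `k = 1` in an arbitrary space of dimension `d`. There, write the vectors as the columns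
of a matrix `A`: the Gram matrix `Aᴴ A` and the frame matrix `F = A Aᴴ` have the same trace and
the same Frobenius norm, and `(tr F)² ≤ d ∑ |F μ μ|² ≤ d ‖F‖²` by Cauchy–Schwarz.
-/

open Finset RCLike Matrix
open scoped ComplexConjugate

namespace Matrix

variable {𝕜 m n : Type*} [RCLike 𝕜] [Fintype m] [Fintype n]

theorem trace_mul_conjTranspose_self_eq_sum_norm_sq (A : Matrix m n 𝕜) :
    (A * Aᴴ).trace = ∑ i, ∑ j, ((‖A i j‖ ^ 2 : ℝ) : 𝕜) := by
  simp [trace, mul_apply, mul_conj]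

theorem sum_norm_sq_conjTranspose_mul_self_eq (A : Matrix m n 𝕜) :
    ∑ i, ∑ j, ‖(Aᴴ * A) i j‖ ^ 2 = ∑ i, ∑ j, ‖(A * Aᴴ) i j‖ ^ 2 := by
  have hcycle : (Aᴴ * A * (Aᴴ * A)ᴴ).trace = (A * Aᴴ * (A * Aᴴ)ᴴ).trace := by
    simp only [conjTranspose_mul, conjTranspose_conjTranspose, Matrix.mul_assoc]
    rw [trace_mul_comm]; simp only [Matrix.mul_assoc]
  simp only [trace_mul_conjTranspose_self_eq_sum_norm_sq] at hcycle
  exact_mod_cast hcycle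

theorem sq_re_trace_le_card_mul_sum_norm_sq (A : Matrix m n 𝕜) :
    re (Aᴴ * A).trace ^ 2 ≤ Fintype.card m * ∑ i, ∑ j, ‖(Aᴴ * A) i j‖ ^ 2 := by
  set F := A * Aᴴ
  have hdiag : ∀ μ, re (F μ μ) ^ 2 ≤ ∑ ν, ‖F μ ν‖ ^ 2 := fun μ =>
    calc re (F μ μ) ^ 2 ≤ ‖F μ μ‖ ^ 2 := sq_le_sq.mpr ((abs_re_le_norm _).trans (le_abs_self _))
      _ ≤ ∑ ν, ‖F μ ν‖ ^ 2 := single_le_sum (f := fun ν => ‖F μ ν‖ ^ 2)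
          (fun _ _ => sq_nonneg _) (mem_univ μ)
  calc re (Aᴴ * A).trace ^ 2 = (∑ μ, re (F μ μ)) ^ 2 := by
        rw [trace_mul_comm, trace, map_sum]; rfl
    _ ≤ Fintype.card m * ∑ μ, re (F μ μ) ^ 2 := sq_sum_le_card_mul_sum_sq
    _ ≤ Fintype.card m * ∑ μ, ∑ ν, ‖F μ ν‖ ^ 2 := by gcongr with μ; exact hdiag μ
    _ = Fintype.card m * ∑ i, ∑ j, ‖(Aᴴ * A) i j‖ ^ 2 := by
        rw [sum_norm_sq_conjTranspose_mul_self_eq]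

end Matrix

variable {𝕜 ι κ : Type*} [RCLike 𝕜] [Fintype ι]

theorem sq_sum_norm_sq_le_card_mul_sum_norm_inner_sq [Fintype κ] (v : ι → EuclideanSpace 𝕜 κ) :
    (∑ i, ‖v i‖ ^ 2) ^ 2 ≤ Fintype.card κ * ∑ i, ∑ j, ‖(inner 𝕜 (v i) (v j) : 𝕜)‖ ^ 2 := by
  let A : Matrix κ ι 𝕜 := Matrix.of fun μ i => v i μ
  have hgram : ∀ i j, (Aᴴ * A) i j = inner 𝕜 (v i) (v j) := fun i j => by
    simp [A, Matrix.mul_apply, EuclideanSpace.inner_eq_star_dotProduct, dotProduct, mul_comm]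
  have htrace : re (Aᴴ * A).trace = ∑ i, ‖v i‖ ^ 2 := by
    simp only [Matrix.trace, Matrix.diag_apply, hgram, inner_self_eq_norm_sq_to_K, map_sum]
    norm_cast
  simpa only [htrace, hgram] using A.sq_re_trace_le_card_mul_sum_norm_sq

theorem sq_sum_norm_sq_le_finrank_mul_sum_norm_inner_sq {E : Type*} [NormedAddCommGroup E]
    [InnerProductSpace 𝕜 E] [FiniteDimensional 𝕜 E] (v : ι → E) :
    (∑ i, ‖v i‖ ^ 2) ^ 2 ≤ Module.finrank 𝕜 E * ∑ i, ∑ j, ‖(inner 𝕜 (v i) (v j) : 𝕜)‖ ^ 2 := by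
  let e := (stdOrthonormalBasis 𝕜 E).repr
  simpa only [e.norm_map, e.inner_map_map, Fintype.card_fin] using
    sq_sum_norm_sq_le_card_mul_sum_norm_inner_sq (fun i => e (v i))

/-- Coordinates of `x ^ ⊗ k` in the orthonormal basis of the symmetric power indexed by
multisets `μ`. The weights `√(countPerms μ)` are square roots of multinomial coefficients, so that
`inner_veronese` is the multinomial theorem. -/
noncomputable def veronese [DecidableEq ι] (k : ℕ) (x : EuclideanSpace 𝕜 ι) :
    EuclideanSpace 𝕜 (Sym ι k) :=
  WithLp.toLp 2 fun μ => (√(μ.val.countPerms : ℝ) : 𝕜) * (μ.val.map x).prod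

theorem inner_veronese [DecidableEq ι] (k : ℕ) (x y : EuclideanSpace 𝕜 ι) :
    inner 𝕜 (veronese k x) (veronese k y) = (inner 𝕜 x y : 𝕜) ^ k := by
  simp only [EuclideanSpace.inner_eq_star_dotProduct, dotProduct, Pi.star_apply, veronese,
    sum_pow, sym_univ]
  refine sum_congr rfl fun μ _ => ?_
  have hsqrt : (√(μ.val.countPerms : ℝ) : 𝕜) * √(μ.val.countPerms : ℝ) = μ.val.countPerms := by
    rw [← ofReal_mul, Real.mul_self_sqrt (Nat.cast_nonneg _), ofReal_natCast]
  simp only [star_mul', RCLike.star_def, conj_ofReal, map_multiset_prod, Multiset.map_map,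
    Function.comp_def, Multiset.prod_map_mul]
  linear_combination (μ.val.map y).prod * (μ.val.map fun t => conj (x t)).prod * hsqrt

theorem norm_veronese [DecidableEq ι] (k : ℕ) (x : EuclideanSpace 𝕜 ι) :
    ‖veronese k x‖ = ‖x‖ ^ k := by
  have h := inner_veronese k x x
  rw [inner_self_eq_norm_sq_to_K, inner_self_eq_norm_sq_to_K, ← pow_mul, mul_comm, pow_mul] at h
  norm_cast at h
  exact (pow_left_inj₀ (norm_nonneg _) (by positivity) two_ne_zero).mp h

theorem welch_bounds_general (n m k : ℕ)
    (x : Fin m → EuclideanSpace ℂ (Fin n)) :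
    ((n + k - 1).choose k : ℝ) *
      ∑ i, ∑ j, ‖(inner ℂ (x i) (x j) : ℂ)‖ ^ (2 * k) ≥
    (∑ i, ‖x i‖ ^ (2 * k)) ^ 2 := by
  simpa only [norm_veronese, inner_veronese, norm_pow, finrank_euclideanSpace,
    Sym.card_sym_eq_choose, Fintype.card_fin, ← pow_mul, mul_comm k 2] using
    sq_sum_norm_sq_le_finrank_mul_sum_norm_inner_sq (𝕜 := ℂ) (fun i => veronese k (x i))

theorem welch_bounds (n m k : ℕ) (hk : 1 ≤ k)
    (x : Fin m → EuclideanSpace ℂ (Fin n)) :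
    ((n + k - 1).choose k : ℝ) *
      ∑ i, ∑ j, ‖(inner ℂ (x i) (x j) : ℂ)‖ ^ (2 * k) ≥
    (∑ i, ‖x i‖ ^ (2 * k)) ^ 2 :=
  welch_bounds_general n m k x
end

section
/- For any finite sequence x_1,...,x_m of unit vectors in C^n with n ≥ 1, the inequality (n+1)·n/2 · Σ_{i,j} |⟨x_i, x_j⟩|^4 ≥ m^2 holds. -/
/-!
Let `A` be the matrix whose columns are the tensor squares `x i ⊗ x i`. Its Gram matrix `Aᴴ A`
has entries `⟪x i, x j⟫²`, and its Frobenius norm equals that of the frame operator `A Aᴴ`, whose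
trace is `∑ ‖x i‖⁴ = m`. The frame operator lives on the symmetric square, of dimension
`n (n + 1) / 2`, so Cauchy–Schwarz gives `m² ≤ n (n + 1) / 2 · ‖A Aᴴ‖²`. Instead of a rank
argument we use that the entries `(p, p)` and `(p, p.swap)` of `A Aᴴ` coincide, so an
off-diagonal `p` contributes at least twice its diagonal entry to the Frobenius norm.
-/

open Finset Matrix

variable {𝕜 : Type*} [RCLike 𝕜]

theorem sum_norm_sq_apply_eq_re_trace_mul_conjTranspose {m n : Type*} [Fintype m] [Fintype n]
    (B : Matrix m n 𝕜) :
    ∑ i, ∑ j, ‖B i j‖ ^ 2 = RCLike.re (B * Bᴴ).trace := by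
  simp only [trace, diag_apply, mul_apply, conjTranspose_apply, RCLike.star_def,
    RCLike.mul_conj, map_sum]
  norm_cast

theorem sum_norm_sq_conjTranspose_mul_self_apply {m n : Type*} [Fintype m] [Fintype n]
    (A : Matrix m n 𝕜) :
    ∑ i, ∑ j, ‖(Aᴴ * A) i j‖ ^ 2 = ∑ p, ∑ q, ‖(A * Aᴴ) p q‖ ^ 2 := by
  simp only [sum_norm_sq_apply_eq_re_trace_mul_conjTranspose, conjTranspose_mul,
    conjTranspose_conjTranspose, Matrix.mul_assoc]
  rw [trace_mul_comm]
  simp only [Matrix.mul_assoc]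

section SwapInvariant

variable {ι : Type*} [DecidableEq ι]

/-- The reciprocal of the size of the orbit of `p` under `Prod.swap`; these weights sum to the
number of orbits. -/
noncomputable def swapWeight (p : ι × ι) : ℝ := if p.1 = p.2 then 1 else 2⁻¹

theorem sum_swapWeight [Fintype ι] :
    ∑ p : ι × ι, swapWeight p = (Fintype.card ι + 1) * Fintype.card ι / 2 := by
  have h : ∀ p : ι × ι, swapWeight p = 2⁻¹ + 2⁻¹ * if p.1 = p.2 then 1 else 0 := by
    intro p; unfold swapWeight; split_ifs <;> norm_num
  simp only [h, sum_add_distrib, ← mul_sum, Fintype.sum_prod_type, sum_ite_eq, mem_univ,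
    if_true, sum_const, card_univ, nsmul_eq_mul, mul_one, Fintype.card_prod, Nat.cast_mul]
  ring

theorem sq_norm_apply_self_le_swapWeight_mul [Fintype ι] (M : Matrix (ι × ι) (ι × ι) 𝕜)
    (hM : ∀ p, M p p.swap = M p p) (p : ι × ι) :
    ‖M p p‖ ^ 2 ≤ swapWeight p * ∑ q, ‖M p q‖ ^ 2 := by
  unfold swapWeight
  split_ifs with h
  · rw [one_mul]
    exact single_le_sum (fun q _ => sq_nonneg ‖M p q‖) (mem_univ p)
  · have hne : p ≠ p.swap := fun hp => h (congrArg Prod.fst hp)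
    calc ‖M p p‖ ^ 2 = 2⁻¹ * ∑ q ∈ {p, p.swap}, ‖M p q‖ ^ 2 := by
          rw [sum_pair hne, hM]; ring
      _ ≤ 2⁻¹ * ∑ q, ‖M p q‖ ^ 2 := by
          gcongr
          exact subset_univ _

theorem sq_norm_trace_le_of_apply_swap [Fintype ι] (M : Matrix (ι × ι) (ι × ι) 𝕜)
    (hM : ∀ p, M p p.swap = M p p) :
    ‖M.trace‖ ^ 2 ≤ (Fintype.card ι + 1) * Fintype.card ι / 2 * ∑ p, ∑ q, ‖M p q‖ ^ 2 := by
  rw [← sum_swapWeight]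
  calc ‖M.trace‖ ^ 2 ≤ (∑ p, ‖M p p‖) ^ 2 := by
        gcongr; exact norm_sum_le _ _
    _ ≤ _ := sum_sq_le_sum_mul_sum_of_sq_le_mul univ
        (fun p _ => by unfold swapWeight; split_ifs <;> norm_num)
        (fun p _ => sum_nonneg fun q _ => sq_nonneg _)
        (fun p _ => sq_norm_apply_self_le_swapWeight_mul M hM p)

end SwapInvariant

section TensorSquare

variable {ι κ : Type*}

def tensorSqMatrix (x : κ → EuclideanSpace 𝕜 ι) : Matrix (ι × ι) κ 𝕜 :=
  of fun p i => x i p.1 * x i p.2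

theorem tensorSqMatrix_apply_swap (x : κ → EuclideanSpace 𝕜 ι) (p : ι × ι) (i : κ) :
    tensorSqMatrix x p.swap i = tensorSqMatrix x p i :=
  mul_comm _ _

theorem conjTranspose_tensorSqMatrix_mul_apply [Fintype ι] (x : κ → EuclideanSpace 𝕜 ι)
    (i j : κ) :
    ((tensorSqMatrix x)ᴴ * tensorSqMatrix x) i j = inner 𝕜 (x i) (x j) ^ 2 := by
  simp only [PiLp.inner_apply, RCLike.inner_apply, sq, sum_mul_sum, mul_apply,
    conjTranspose_apply, tensorSqMatrix, of_apply, RCLike.star_def, map_mul,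
    Fintype.sum_prod_type]
  exact sum_congr rfl fun a _ => sum_congr rfl fun b _ => by ring

end TensorSquare

theorem welch_bound_k2_unit_vectors_general (n m : ℕ)
    (x : Fin m → EuclideanSpace ℂ (Fin n)) (hx : ∀ i, ‖x i‖ = 1) :
    ((n + 1) * n / 2 : ℝ) * ∑ i, ∑ j, ‖(inner ℂ (x i) (x j) : ℂ)‖ ^ 4 ≥ (m : ℝ) ^ 2 := by
  set A := tensorSqMatrix x
  have hgram : ∀ i j, ‖(inner ℂ (x i) (x j) : ℂ)‖ ^ 4 = ‖(Aᴴ * A) i j‖ ^ 2 := fun i j => by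
    rw [conjTranspose_tensorSqMatrix_mul_apply, norm_pow, ← pow_mul]
  have htrace : (A * Aᴴ).trace = m := by
    rw [trace_mul_comm]
    simp [trace, A, conjTranspose_tensorSqMatrix_mul_apply, inner_self_eq_norm_sq_to_K, hx]
  have hswap : ∀ p, (A * Aᴴ) p p.swap = (A * Aᴴ) p p := fun p => by
    simp only [mul_apply, conjTranspose_apply, A, tensorSqMatrix_apply_swap]
  calc (m : ℝ) ^ 2 = ‖(A * Aᴴ).trace‖ ^ 2 := by simp [htrace]
    _ ≤ ((n + 1) * n / 2 : ℝ) * ∑ p, ∑ q, ‖(A * Aᴴ) p q‖ ^ 2 := by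
        simpa using sq_norm_trace_le_of_apply_swap _ hswap
    _ = ((n + 1) * n / 2 : ℝ) * ∑ i, ∑ j, ‖(inner ℂ (x i) (x j) : ℂ)‖ ^ 4 := by
        simp only [hgram, sum_norm_sq_conjTranspose_mul_self_apply]

theorem welch_bound_k2_unit_vectors (n m : ℕ) (hn : 1 ≤ n)
    (x : Fin m → EuclideanSpace ℂ (Fin n)) (hx : ∀ i, ‖x i‖ = 1) :
    ((n + 1) * n / 2 : ℝ) * ∑ i, ∑ j, ‖(inner ℂ (x i) (x j) : ℂ)‖ ^ 4 ≥ (m : ℝ) ^ 2 :=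
  welch_bound_k2_unit_vectors_general n m x hx
end

section
/- If n ≥ 2, then any collection of mutually unbiased orthonormal bases of C^n contains at most n+1 bases. -/
/-!
Send a unit vector `x` of `ℂⁿ` to the rank-one projection `x x*`, viewed as a vector of the
`n²`-dimensional space of matrices with the Hilbert–Schmidt inner product; then
`⟪x x*, y y*⟫ = |⟪x, y⟫|²`. Subtracting `I / n` from each projection, the images of one
orthonormal basis span a space of dimension at least `n - 1`, the spaces coming from two
unbiased bases are orthogonal, and all of them are orthogonal to `I`. Counting dimensions gives
`N (n - 1) + 1 ≤ n²`, i.e. `N ≤ n + 1`.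
-/

open Module Submodule
open scoped ComplexConjugate

theorem iSupIndep.sum_finrank_le_finrank {K V ι : Type*} [DivisionRing K] [AddCommGroup V]
    [Module K V] [FiniteDimensional K V] [Fintype ι] {W : ι → Submodule K V}
    (hW : iSupIndep W) : ∑ i, finrank K (W i) ≤ finrank K V := by
  classical
  rw [← finrank_directSum]
  exact LinearMap.finrank_le_finrank_of_injective hW.dfinsupp_lsum_injective

theorem LinearIndependent.card_le_finrank_span_sub_smul_add_one {K V ι : Type*} [DivisionRing K]
    [AddCommGroup V] [Module K V] [FiniteDimensional K V] [Fintype ι] {v : ι → V}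
    (hv : LinearIndependent K v) (c : K) (e : V) :
    Fintype.card ι ≤ finrank K (span K (Set.range fun i => v i - c • e)) + 1 := by
  calc Fintype.card ι = finrank K (span K (Set.range v)) := (finrank_span_eq_card hv).symm
    _ ≤ finrank K ↥(span K (Set.range fun i => v i - c • e) ⊔ (K ∙ e)) := by
      refine Submodule.finrank_mono (span_le.2 (Set.range_subset_iff.2 fun i => ?_))
      rw [← sub_add_cancel (v i) (c • e)]
      exact add_mem_sup (subset_span ⟨i, rfl⟩) (smul_mem _ c (mem_span_singleton_self e))
    _ ≤ finrank K (span K (Set.range fun i => v i - c • e)) + finrank K (K ∙ e) :=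
      Submodule.finrank_add_le_finrank_add_finrank _ _
    _ ≤ _ := by
      gcongr
      simpa using finrank_span_le_card ({e} : Set V)

section InnerProductSpace

variable {𝕜 F : Type*} [RCLike 𝕜] [NormedAddCommGroup F] [InnerProductSpace 𝕜 F]
  [FiniteDimensional 𝕜 F]

local notation "⟪" x ", " y "⟫" => inner 𝕜 x y

theorem sum_finrank_span_add_one_le_finrank {κ ι : Type*} [Fintype κ] {e : F} (he : e ≠ 0)
    (q : κ → ι → F) (heq : ∀ t i, ⟪e, q t i⟫ = 0)
    (hqq : ∀ t t', t ≠ t' → ∀ i j, ⟪q t i, q t' j⟫ = 0) :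
    ∑ t, finrank 𝕜 (span 𝕜 (Set.range (q t))) + 1 ≤ finrank 𝕜 F := by
  let V : Option κ → Submodule 𝕜 F := fun o => o.elim (𝕜 ∙ e) fun t => span 𝕜 (Set.range (q t))
  have hV : OrthogonalFamily 𝕜 (fun o => V o) fun o => (V o).subtypeₗᵢ := by
    refine orthogonalFamily_iff_pairwise.2 ?_
    rintro (_ | t) (_ | t') h
    · exact absurd rfl h
    · exact isOrtho_span.2 <| by rintro _ rfl _ ⟨i, rfl⟩; exact heq t' i
    · exact (isOrtho_span.2 <| by rintro _ rfl _ ⟨i, rfl⟩; exact heq t i).symm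
    · exact isOrtho_span.2 <| by
        rintro _ ⟨i, rfl⟩ _ ⟨j, rfl⟩; exact hqq t t' (fun h' => h (congrArg _ h')) i j
  have hsum := hV.independent.sum_finrank_le_finrank
  rw [Fintype.sum_option, add_comm] at hsum
  have hnone : finrank 𝕜 (V none) = 1 := finrank_span_singleton he
  rwa [hnone] at hsum

theorem card_mul_card_pred_add_one_le_finrank {κ ι : Type*} [Fintype κ] [Fintype ι] [Nonempty ι]
    (p : κ → ι → F) (e : F) (hp : ∀ t, Orthonormal 𝕜 (p t))
    (hunb : ∀ t t', t ≠ t' → ∀ i j, ⟪p t i, p t' j⟫ = (Fintype.card ι : 𝕜)⁻¹)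
    (he : ∀ t i, ⟪e, p t i⟫ = 1) (hee : ⟪e, e⟫ = Fintype.card ι) :
    Fintype.card κ * (Fintype.card ι - 1) + 1 ≤ finrank 𝕜 F := by
  set n := Fintype.card ι
  have hn : (n : 𝕜) ≠ 0 := Nat.cast_ne_zero.2 Fintype.card_ne_zero
  have he0 : e ≠ 0 := fun he0 => hn (by simp [← hee, he0])
  have inner_e_sub : ∀ t i, ⟪e, p t i - (n : 𝕜)⁻¹ • e⟫ = 0 := fun t i => by
    simp only [inner_sub_right, inner_smul_right, he, hee]
    field_simp
    ring
  have inner_sub_sub : ∀ t t', t ≠ t' → ∀ i j,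
      ⟪p t i - (n : 𝕜)⁻¹ • e, p t' j - (n : 𝕜)⁻¹ • e⟫ = 0 := fun t t' h i j => by
    simp only [inner_sub_left, inner_sub_right, inner_smul_left, inner_smul_right, he, hee,
      hunb t t' h, map_inv₀, map_natCast]
    rw [← inner_conj_symm, he, map_one]
    field_simp
    ring
  have hspan : ∀ t, n - 1 ≤ finrank 𝕜 (span 𝕜 (Set.range fun i => p t i - (n : 𝕜)⁻¹ • e)) :=
    fun t => Nat.sub_le_of_le_add
      ((hp t).linearIndependent.card_le_finrank_span_sub_smul_add_one _ e)
  have hsum := Finset.sum_le_sum fun t (_ : t ∈ Finset.univ) => hspan t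
  rw [Finset.sum_const, Finset.card_univ, smul_eq_mul] at hsum
  have := sum_finrank_span_add_one_le_finrank he0 _ inner_e_sub inner_sub_sub
  omega

end InnerProductSpace

namespace EuclideanSpace

variable {ι : Type*} [Fintype ι]

/-- The (transposed) matrix of the projection `x x*`; on `EuclideanSpace ℂ (ι × ι)` the inner
product of such matrices is the Hilbert–Schmidt one. -/
noncomputable def projVec (x : EuclideanSpace ℂ ι) : EuclideanSpace ℂ (ι × ι) :=
  WithLp.toLp 2 fun a => conj (x a.1) * x a.2

noncomputable def idVec [DecidableEq ι] : EuclideanSpace ℂ (ι × ι) :=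
  WithLp.toLp 2 fun a => if a.1 = a.2 then 1 else 0

theorem inner_projVec_projVec (x y : EuclideanSpace ℂ ι) :
    inner ℂ (projVec x) (projVec y) = (‖inner ℂ x y‖ ^ 2 : ℝ) := by
  rw [Complex.ofReal_pow, ← Complex.conj_mul']
  simp only [PiLp.inner_apply, RCLike.inner_apply, map_sum, Finset.sum_mul_sum,
    Fintype.sum_prod_type, projVec, map_mul, Complex.conj_conj]
  exact Finset.sum_congr rfl fun a _ => Finset.sum_congr rfl fun b _ => by ring

theorem inner_idVec_projVec [DecidableEq ι] (x : EuclideanSpace ℂ ι) :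
    inner ℂ idVec (projVec x) = inner ℂ x x := by
  simp only [PiLp.inner_apply, RCLike.inner_apply, Fintype.sum_prod_type, projVec, idVec]
  simp [apply_ite conj, ite_mul, mul_comm]

theorem inner_idVec_idVec [DecidableEq ι] :
    inner ℂ (idVec : EuclideanSpace ℂ (ι × ι)) idVec = Fintype.card ι := by
  simp only [PiLp.inner_apply, RCLike.inner_apply, Fintype.sum_prod_type, idVec]
  simp [apply_ite conj]

theorem _root_.Orthonormal.projVec {κ : Type*} {v : κ → EuclideanSpace ℂ ι}
    (hv : Orthonormal ℂ v) : Orthonormal ℂ (projVec ∘ v) := by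
  classical
  refine orthonormal_iff_ite.2 fun i j => ?_
  rw [Function.comp_apply, Function.comp_apply, inner_projVec_projVec, orthonormal_iff_ite.1 hv]
  split_ifs <;> simp

end EuclideanSpace

theorem mub_upper_bound (n N : ℕ) (hn : 2 ≤ n)
    (B : Fin N → Fin n → EuclideanSpace ℂ (Fin n))
    (horth : ∀ t, Orthonormal ℂ (B t))
    (hmub : ∀ t t', t ≠ t' → ∀ i j,
      ‖(inner ℂ (B t i) (B t' j) : ℂ)‖ = 1 / Real.sqrt n) :
    N ≤ n + 1 := by
  have : Nonempty (Fin n) := ⟨⟨0, by omega⟩⟩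
  have hbound := card_mul_card_pred_add_one_le_finrank (𝕜 := ℂ)
    (fun t i => EuclideanSpace.projVec (B t i)) EuclideanSpace.idVec (fun t => (horth t).projVec)
    (fun t t' h i j => ?_) (fun t i => ?_) EuclideanSpace.inner_idVec_idVec
  · simp only [Fintype.card_fin, finrank_euclideanSpace, Fintype.card_prod] at hbound
    obtain ⟨m, rfl⟩ : ∃ m, n = m + 1 := ⟨n - 1, by omega⟩
    rw [Nat.add_sub_cancel] at hbound
    have : N * m ≤ (m + 2) * m := by nlinarith
    exact Nat.le_of_mul_le_mul_right this (by omega)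
  · rw [EuclideanSpace.inner_projVec_projVec, hmub t t' h, Fintype.card_fin, div_pow, one_pow,
      Real.sq_sqrt (Nat.cast_nonneg n)]
    simp
  · rw [EuclideanSpace.inner_idVec_projVec, inner_self_eq_norm_sq_to_K, (horth t).1 i]
    simp
end

section
/- Let B_0,...,B_n be n+1 orthonormal bases of C^n and let X be the union (as a multiset) of their vectors. Then X attains the Welch bound for k=2 with equality, i.e., binom(n+1,2) · Σ_{x,y∈X} |⟨x,y⟩|^4 = (Σ_{x∈X} |⟨x,x⟩|^2)^2, if and only if the bases B_0,...,B_n are pairwise mutually unbiased. -/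
/-!
For orthonormal bases `b`, `b'` of `ℂⁿ`, Parseval makes every row of the matrix
`(|⟨b i, b' j⟩|²)` sum to `1`, so `∑ |⟨b i, b' j⟩|⁴ = 1 + ∑ (|⟨b i, b' j⟩|² - 1/n)²`, and the
second term vanishes exactly when `b` and `b'` are unbiased. The `n + 1` diagonal blocks
contribute `n` each, so the left-hand sum is `2n(n+1)` plus the nonnegative defects of all
pairs of distinct bases, while `∑ ‖x‖⁴ = n(n+1)`. As `binom(n+1, 2) = n(n+1)/2`, the Welch
equality holds iff every defect vanishes.
-/

open Finset Module
open scoped InnerProductSpace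

theorem Fintype.sum_sq_sub_inv_card_of_sum_eq_one {ι : Type*} [Fintype ι] {a : ι → ℝ}
    (ha : ∑ i, a i = 1) :
    ∑ i, (a i - (Fintype.card ι : ℝ)⁻¹) ^ 2 = ∑ i, a i ^ 2 - (Fintype.card ι : ℝ)⁻¹ := by
  have hcard : (Fintype.card ι : ℝ) ≠ 0 := by
    intro h
    simp [Fintype.card_eq_zero_iff.mp (by exact_mod_cast h)] at ha
  simp only [sub_sq, sum_add_distrib, sum_sub_distrib, ← sum_mul, ← mul_sum, ha, sum_const,
    card_univ, nsmul_eq_mul]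
  field_simp
  ring

section

variable {𝕜 E ι κ τ : Type*} [RCLike 𝕜] [NormedAddCommGroup E] [InnerProductSpace 𝕜 E]
  [Fintype ι] [Fintype κ] [Fintype τ]

theorem Orthonormal.sum_sq_norm_inner_left_of_card_eq_finrank [FiniteDimensional 𝕜 E]
    {v : ι → E} (hv : Orthonormal 𝕜 v) (hcard : Fintype.card ι = finrank 𝕜 E) (x : E) :
    ∑ i, ‖⟪x, v i⟫_𝕜‖ ^ 2 = ‖x‖ ^ 2 := by
  simpa using (OrthonormalBasis.mk hv
    (hv.linearIndependent.span_eq_top_of_card_eq_finrank' hcard).ge).sum_sq_norm_inner_left x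

theorem Orthonormal.sum_norm_inner_pow_four_self [DecidableEq ι] {v : ι → E}
    (hv : Orthonormal 𝕜 v) :
    ∑ i, ∑ j, ‖⟪v i, v j⟫_𝕜‖ ^ 4 = Fintype.card ι := by
  simp [orthonormal_iff_ite.mp hv, apply_ite (fun z : 𝕜 ↦ ‖z‖ ^ 4)]

variable (𝕜) in
noncomputable def unbiasedDefect (u : κ → E) (v : ι → E) : ℝ :=
  ∑ k, ∑ i, (‖⟪u k, v i⟫_𝕜‖ ^ 2 - (Fintype.card ι : ℝ)⁻¹) ^ 2

theorem unbiasedDefect_nonneg (u : κ → E) (v : ι → E) : 0 ≤ unbiasedDefect 𝕜 u v :=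
  sum_nonneg fun _ _ ↦ sum_nonneg fun _ _ ↦ sq_nonneg _

theorem unbiasedDefect_eq_zero_iff {u : κ → E} {v : ι → E} :
    unbiasedDefect 𝕜 u v = 0 ↔ ∀ k i, ‖⟪u k, v i⟫_𝕜‖ = 1 / √(Fintype.card ι) := by
  have hsq (z : 𝕜) : ‖z‖ ^ 2 = (Fintype.card ι : ℝ)⁻¹ ↔ ‖z‖ = 1 / √(Fintype.card ι) := by
    rw [← sq_eq_sq₀ (norm_nonneg z) (by positivity), div_pow, one_pow,
      Real.sq_sqrt (Nat.cast_nonneg _), one_div]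
  simp only [unbiasedDefect]
  rw [sum_eq_zero_iff_of_nonneg fun _ _ ↦ sum_nonneg fun _ _ ↦ sq_nonneg _]
  simp only [sum_eq_zero_iff_of_nonneg fun _ _ ↦ sq_nonneg _, mem_univ, true_implies,
    sq_eq_zero_iff, sub_eq_zero, hsq]

theorem Orthonormal.sum_norm_inner_pow_four_eq_add_unbiasedDefect [FiniteDimensional 𝕜 E]
    {u : κ → E} {v : ι → E} (hv : Orthonormal 𝕜 v) (hu : ∀ k, ‖u k‖ = 1)
    (hcard : Fintype.card ι = finrank 𝕜 E) :
    ∑ k, ∑ i, ‖⟪u k, v i⟫_𝕜‖ ^ 4 =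
      Fintype.card κ / Fintype.card ι + unbiasedDefect 𝕜 u v := by
  have hrow (k : κ) : ∑ i, ‖⟪u k, v i⟫_𝕜‖ ^ 4 =
      (Fintype.card ι : ℝ)⁻¹ + ∑ i, (‖⟪u k, v i⟫_𝕜‖ ^ 2 - (Fintype.card ι : ℝ)⁻¹) ^ 2 := by
    rw [Fintype.sum_sq_sub_inv_card_of_sum_eq_one (by
      rw [hv.sum_sq_norm_inner_left_of_card_eq_finrank hcard, hu, one_pow])]
    simp only [← pow_mul]
    ring
  simp only [hrow, sum_add_distrib, sum_const, card_univ, nsmul_eq_mul, unbiasedDefect]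
  ring

theorem sum_norm_inner_pow_four_eq_add_sum_unbiasedDefect [FiniteDimensional 𝕜 E] [DecidableEq τ]
    [DecidableEq ι] [Nonempty ι] {B : τ → ι → E} (hB : ∀ t, Orthonormal 𝕜 (B t))
    (hcard : Fintype.card ι = finrank 𝕜 E) :
    ∑ t, ∑ i, ∑ s, ∑ j, ‖⟪B t i, B s j⟫_𝕜‖ ^ 4 =
      Fintype.card τ * Fintype.card ι + Fintype.card τ * (Fintype.card τ - 1) +
        ∑ t, ∑ s ∈ univ.erase t, unbiasedDefect 𝕜 (B t) (B s) := by
  have hcross (t s : τ) : ∑ i, ∑ j, ‖⟪B t i, B s j⟫_𝕜‖ ^ 4 = 1 + unbiasedDefect 𝕜 (B t) (B s) := by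
    rw [(hB s).sum_norm_inner_pow_four_eq_add_unbiasedDefect (hB t).1 hcard,
      div_self (Nat.cast_ne_zero.mpr Fintype.card_ne_zero)]
  have hrow (t : τ) : ∑ s, ∑ i, ∑ j, ‖⟪B t i, B s j⟫_𝕜‖ ^ 4 =
      Fintype.card ι + (Fintype.card τ - 1) + ∑ s ∈ univ.erase t, unbiasedDefect 𝕜 (B t) (B s) := by
    rw [← add_sum_erase _ _ (mem_univ t), (hB t).sum_norm_inner_pow_four_self,
      sum_congr rfl fun s _ ↦ hcross t s, sum_add_distrib, sum_erase_eq_sub (mem_univ t)]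
    simp only [sum_const, card_univ, nsmul_eq_mul, mul_one]
    ring
  simp only [sum_comm (γ := ι) (α := τ), hrow, sum_add_distrib, sum_const, card_univ, nsmul_eq_mul]

theorem sum_erase_unbiasedDefect_eq_zero_iff [DecidableEq τ] {B : τ → ι → E} :
    ∑ t, ∑ s ∈ univ.erase t, unbiasedDefect 𝕜 (B t) (B s) = 0 ↔
      ∀ t s, t ≠ s → ∀ i j, ‖⟪B t i, B s j⟫_𝕜‖ = 1 / √(Fintype.card ι) := by
  rw [sum_eq_zero_iff_of_nonneg fun _ _ ↦ sum_nonneg fun _ _ ↦ unbiasedDefect_nonneg _ _]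
  simp only [sum_eq_zero_iff_of_nonneg fun _ _ ↦ unbiasedDefect_nonneg _ _, mem_univ,
    true_implies, mem_erase, and_true, unbiasedDefect_eq_zero_iff, ne_comm]

end

theorem welch_k2_equality_iff_mub (n : ℕ) (hn : 1 ≤ n)
    (B : Fin (n + 1) → Fin n → EuclideanSpace ℂ (Fin n))
    (horth : ∀ t, Orthonormal ℂ (B t)) :
    (((n + 1).choose 2 : ℝ) *
        ∑ t, ∑ i, ∑ s, ∑ j, ‖(inner ℂ (B t i) (B s j) : ℂ)‖ ^ 4 =
      (∑ t, ∑ i, ‖B t i‖ ^ 4) ^ 2) ↔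
    (∀ t s, t ≠ s → ∀ i j,
      ‖(inner ℂ (B t i) (B s j) : ℂ)‖ = 1 / Real.sqrt n) := by
  have : Nonempty (Fin n) := Fin.pos_iff_nonempty.mp hn
  have hcard : Fintype.card (Fin n) = finrank ℂ (EuclideanSpace ℂ (Fin n)) := by simp
  have hunit : ∑ t, ∑ i, ‖B t i‖ ^ 4 = ((n : ℝ) + 1) * n := by
    simp [fun t ↦ (horth t).1]
  have hmub := sum_erase_unbiasedDefect_eq_zero_iff (𝕜 := ℂ) (B := B)
  rw [Fintype.card_fin] at hmub
  have hwelch (F : ℝ) :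
      ((n + 1).choose 2 : ℝ) * ((n + 1 : ℕ) * n + (n + 1 : ℕ) * ((n + 1 : ℕ) - 1) + F) =
        (((n : ℝ) + 1) * n) ^ 2 + ((n : ℝ) + 1) * n / 2 * F := by
    rw [Nat.cast_choose_two]
    push_cast
    ring
  have hpos : 0 < ((n : ℝ) + 1) * n / 2 := by positivity
  rw [sum_norm_inner_pow_four_eq_add_sum_unbiasedDefect horth hcard, hunit, ← hmub,
    Fintype.card_fin, Fintype.card_fin, hwelch, add_eq_left, mul_eq_zero, or_iff_right hpos.ne']
end

section
/- Let G be the m×m Gram matrix of vectors x_1,...,x_m in C^n, i.e., G_{ij} = ⟨x_i, x_j⟩, and let k ≥ 1. Then the rank of the k-th entrywise (Schur) power G^{(k)} is at most binom(n+k-1, k). -/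
/-!
By the multinomial theorem, `⟪x i, x j⟫ ^ k` is a sum over `k`-multisets `s` of coordinates of
`countPerms s * ∏_{l ∈ s} conj (x i l) * ∏_{l ∈ s} x j l`, so `G^{(k)} = A * B` with inner
dimension the number of `k`-multisets of `Fin n`.
-/

open Finset

theorem sum_mul_pow_eq_sum_sym {R ι : Type*} [CommSemiring R] [Fintype ι] [DecidableEq ι]
    (u v : ι → R) (k : ℕ) :
    (∑ l, u l * v l) ^ k =
      ∑ s : Sym ι k, (s.1.countPerms : R) * (s.1.map u).prod * (s.1.map v).prod := by
  rw [sum_pow, sym_univ]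
  refine sum_congr rfl fun s _ => ?_
  rw [Multiset.prod_map_mul, mul_assoc]

theorem Matrix.rank_of_sum_mul_pow_le {R ι m o : Type*} [CommSemiring R] [StrongRankCondition R]
    [Fintype ι] [Fintype o] (u : m → ι → R) (v : o → ι → R) (k : ℕ) :
    (Matrix.of fun i j => (∑ l, u i l * v j l) ^ k).rank ≤ (Fintype.card ι + k - 1).choose k := by
  classical
  let A : Matrix m (Sym ι k) R := fun i s => s.1.countPerms * (s.1.map (u i)).prod
  let B : Matrix (Sym ι k) o R := fun s j => (s.1.map (v j)).prod
  have hAB : (Matrix.of fun i j => (∑ l, u i l * v j l) ^ k) = A * B := by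
    ext i j
    rw [Matrix.of_apply, sum_mul_pow_eq_sum_sym, Matrix.mul_apply]
  calc (Matrix.of fun i j => (∑ l, u i l * v j l) ^ k).rank
      = (A * B).rank := by rw [hAB]
    _ ≤ Fintype.card (Sym ι k) := (A.rank_mul_le_left B).trans A.rank_le_card_width
    _ = (Fintype.card ι + k - 1).choose k := Sym.card_sym_eq_choose k

theorem schur_power_gram_rank_le_general (n m k : ℕ)
    (x : Fin m → EuclideanSpace ℂ (Fin n))
    (G : Matrix (Fin m) (Fin m) ℂ)
    (hG : ∀ i j, G i j = (inner ℂ (x i) (x j) : ℂ)) :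
    (Matrix.of fun i j => (G i j) ^ k).rank ≤ (n + k - 1).choose k := by
  have hG_sum : ∀ i j, G i j = ∑ l, (starRingEnd ℂ) (x i l) * x j l := fun i j => by
    rw [hG, PiLp.inner_apply]
    exact sum_congr rfl fun l _ => RCLike.inner_apply' _ _
  simpa only [hG_sum, Fintype.card_fin] using
    Matrix.rank_of_sum_mul_pow_le (fun i l => (starRingEnd ℂ) (x i l)) (fun j l => x j l) k

theorem schur_power_gram_rank_le (n m k : ℕ) (hk : 1 ≤ k)
    (x : Fin m → EuclideanSpace ℂ (Fin n))
    (G : Matrix (Fin m) (Fin m) ℂ)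
    (hG : ∀ i j, G i j = (inner ℂ (x i) (x j) : ℂ)) :
    (Matrix.of fun i j => (G i j) ^ k).rank ≤ (n + k - 1).choose k :=
  schur_power_gram_rank_le_general n m k x G hG
end

section
/- Let B be an n×m complex matrix with columns x_1,...,x_m and rows w_1,...,w_n. Then the columns attain the Welch bound for k=1 with equality, i.e., n · Σ_{i,j} |⟨x_i,x_j⟩|^2 = (Σ_i ⟨x_i,x_i⟩)^2, if and only if the rows w_1,...,w_n all have equal length and are pairwise orthogonal. -/
/-!
Both sides only depend on the rows: the Gram sum of the columns is
`‖BᴴB‖_F² = tr (BᴴB BᴴB) = tr (BBᴴ BBᴴ) = ‖BBᴴ‖_F²`, the Gram sum of the rows, and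
`∑ ‖x_j‖² = ∑ ‖w_i‖²` is the squared Frobenius norm of `B`. For any vectors `w_1, …, w_n`,
`n ∑ |⟨w_p, w_q⟩|² ≥ n ∑ ‖w_p‖⁴ ≥ (∑ ‖w_p‖²)²`: the first step drops the off-diagonal terms and
the second is Cauchy–Schwarz, so equality holds iff the rows are orthogonal and of equal length.
-/

open Finset Matrix WithLp

open scoped InnerProductSpace

section

variable {ι : Type*} [Fintype ι]

theorem two_mul_card_mul_sum_sq_sub_sq_sum (a : ι → ℝ) :
    2 * ((Fintype.card ι : ℝ) * ∑ i, a i ^ 2 - (∑ i, a i) ^ 2) = ∑ i, ∑ j, (a i - a j) ^ 2 := by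
  simp only [sub_sq, sum_add_distrib, sum_sub_distrib, sum_const, card_univ, nsmul_eq_mul,
    ← mul_sum, ← sum_mul, mul_assoc]
  ring

theorem card_mul_sum_sq_eq_sq_sum_iff (a : ι → ℝ) :
    (Fintype.card ι : ℝ) * ∑ i, a i ^ 2 = (∑ i, a i) ^ 2 ↔ ∀ i j, a i = a j := by
  rw [← sub_eq_zero, ← mul_eq_zero_iff_left two_ne_zero, two_mul_card_mul_sum_sq_sub_sq_sum,
    Fintype.sum_eq_zero_iff_of_nonneg fun i => sum_nonneg fun j _ => sq_nonneg _]
  simp only [funext_iff, Pi.zero_apply,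
    Fintype.sum_eq_zero_iff_of_nonneg fun _ => sq_nonneg _, sq_eq_zero_iff, sub_eq_zero]

variable {𝕜 E : Type*} [RCLike 𝕜] [SeminormedAddCommGroup E] [InnerProductSpace 𝕜 E]

theorem sum_sum_norm_inner_sq_eq_diag_add_offDiag [DecidableEq ι] (v : ι → E) :
    ∑ i, ∑ j, ‖⟪v i, v j⟫_𝕜‖ ^ 2 =
      ∑ i, (‖v i‖ ^ 2) ^ 2 + ∑ i, ∑ j ∈ {i}ᶜ, ‖⟪v i, v j⟫_𝕜‖ ^ 2 := by
  rw [← sum_add_distrib]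
  refine sum_congr rfl fun i _ => ?_
  rw [Fintype.sum_eq_add_sum_compl i, inner_self_eq_norm_sq_to_K, norm_pow, RCLike.norm_ofReal,
    abs_norm]

theorem card_mul_sum_sum_norm_inner_sq_eq_sq_sum_norm_sq_iff (v : ι → E) :
    (Fintype.card ι : ℝ) * ∑ i, ∑ j, ‖⟪v i, v j⟫_𝕜‖ ^ 2 = (∑ i, ‖v i‖ ^ 2) ^ 2 ↔
      (∀ i j, ‖v i‖ = ‖v j‖) ∧ ∀ i j, i ≠ j → ⟪v i, v j⟫_𝕜 = 0 := by
  classical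
  rw [sum_sum_norm_inner_sq_eq_diag_add_offDiag, mul_add]
  set offDiag := ∑ i, ∑ j ∈ {i}ᶜ, ‖⟪v i, v j⟫_𝕜‖ ^ 2
  have h_offDiag_nonneg : 0 ≤ (Fintype.card ι : ℝ) * offDiag := by positivity
  have h_cs := sq_sum_le_card_mul_sum_sq (s := univ) (f := fun i => ‖v i‖ ^ 2)
  rw [card_univ] at h_cs
  constructor
  · intro h
    have h_diag := (card_mul_sum_sq_eq_sq_sum_iff fun i => ‖v i‖ ^ 2).1 (by linarith)
    refine ⟨fun i j => (pow_left_inj₀ (norm_nonneg _) (norm_nonneg _) two_ne_zero).1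
      (h_diag i j), fun i j hij => ?_⟩
    have : Nonempty ι := ⟨i⟩
    have h_zero : offDiag = 0 :=
      (mul_eq_zero.1 (by linarith)).resolve_left (Nat.cast_ne_zero.2 Fintype.card_ne_zero)
    rw [Fintype.sum_eq_zero_iff_of_nonneg fun _ => by positivity] at h_zero
    have := (sum_eq_zero_iff_of_nonneg fun _ _ => by positivity).1 (congrFun h_zero i) j
      (by simpa using hij.symm)
    simpa using this
  · rintro ⟨h_norm, h_orth⟩
    have h_zero : offDiag = 0 := sum_eq_zero fun i _ => sum_eq_zero fun j hj => by
      simp [h_orth i j (by simpa [eq_comm] using hj)]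
    rw [h_zero, (card_mul_sum_sq_eq_sq_sum_iff fun i => ‖v i‖ ^ 2).2 fun i j => by rw [h_norm i j]]
    ring

end

section

variable {𝕜 m n : Type*} [RCLike 𝕜]

theorem Matrix.IsHermitian.sum_sum_norm_sq_eq_trace_mul_self [Fintype n] {A : Matrix n n 𝕜}
    (hA : A.IsHermitian) : ((∑ i, ∑ j, ‖A i j‖ ^ 2 : ℝ) : 𝕜) = (A * A).trace := by
  simp only [trace, diag_apply, mul_apply, RCLike.ofReal_sum, RCLike.ofReal_pow, ← RCLike.conj_mul,
    RCLike.star_def.symm, hA.apply]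
  exact Fintype.sum_congr _ _ fun i => Fintype.sum_congr _ _ fun j => mul_comm _ _

theorem sum_sum_norm_sq_conjTranspose_mul_self_eq [Fintype m] [Fintype n] (B : Matrix m n 𝕜) :
    ∑ i, ∑ j, ‖(Bᴴ * B) i j‖ ^ 2 = ∑ i, ∑ j, ‖(B * Bᴴ) i j‖ ^ 2 := by
  apply (RCLike.ofReal_injective (K := 𝕜))
  rw [(isHermitian_conjTranspose_mul_self B).sum_sum_norm_sq_eq_trace_mul_self,
    (isHermitian_mul_conjTranspose_self B).sum_sum_norm_sq_eq_trace_mul_self, Matrix.mul_assoc,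
    trace_mul_comm]
  simp only [Matrix.mul_assoc]

theorem inner_toLp_cols [Fintype m] (B : Matrix m n 𝕜) (i j : n) :
    ⟪toLp 2 fun k => B k i, toLp 2 fun k => B k j⟫_𝕜 = (Bᴴ * B) i j := by
  simp [EuclideanSpace.inner_toLp_toLp, mul_apply, dotProduct, mul_comm]

theorem inner_toLp_rows [Fintype n] (B : Matrix m n 𝕜) (i j : m) :
    ⟪toLp 2 fun k => B i k, toLp 2 fun k => B j k⟫_𝕜 = (B * Bᴴ) j i := by
  simp [EuclideanSpace.inner_toLp_toLp, mul_apply, dotProduct]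

theorem sum_norm_sq_toLp_cols_eq_rows [Fintype m] [Fintype n] (B : Matrix m n 𝕜) :
    ∑ j, ‖toLp 2 fun i => B i j‖ ^ 2 = ∑ i, ‖toLp 2 fun j => B i j‖ ^ 2 := by
  simp only [EuclideanSpace.norm_sq_eq]
  exact sum_comm

end

theorem welch_k1_equality_iff_rows_orthogonal (n m : ℕ)
    (B : Matrix (Fin n) (Fin m) ℂ) :
    (let x : Fin m → EuclideanSpace ℂ (Fin n) := fun j => WithLp.toLp 2 (fun i => B i j);
     let w : Fin n → EuclideanSpace ℂ (Fin m) := fun i => WithLp.toLp 2 (fun j => B i j);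
     ((n : ℝ) * ∑ i, ∑ j, ‖(inner ℂ (x i) (x j) : ℂ)‖ ^ 2 =
       (∑ j, ‖x j‖ ^ 2) ^ 2) ↔
     ((∀ i i', ‖w i‖ = ‖w i'‖) ∧
      (∀ i i', i ≠ i' → (inner ℂ (w i) (w i') : ℂ) = 0))) := by
  intro x w
  have h_gram : ∑ i, ∑ j, ‖⟪x i, x j⟫_ℂ‖ ^ 2 = ∑ i, ∑ j, ‖⟪w i, w j⟫_ℂ‖ ^ 2 := by
    simp only [x, w, inner_toLp_cols, inner_toLp_rows]
    rw [sum_sum_norm_sq_conjTranspose_mul_self_eq, sum_comm]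
  rw [h_gram, sum_norm_sq_toLp_cols_eq_rows]
  simpa using card_mul_sum_sum_norm_inner_sq_eq_sq_sum_norm_sq_iff (𝕜 := ℂ) w
end

section
/- Let G and N be finite abelian groups with |G| = |N| = n, and suppose f : G → N satisfies: for all g_1,g_2,g_3,g_4 ∈ G with g_1+g_2 = g_3+g_4 and f(g_1)+f(g_2) = f(g_3)+f(g_4) we have {g_1,g_2} = {g_3,g_4}. Then f is planar: for every nonzero a ∈ G and every b ∈ N, the equation f(x+a) − f(x) = b has exactly one solution x ∈ G. -/
theorem uslovie_implies_planar
    (G N : Type*) [AddCommGroup G] [Fintype G] [AddCommGroup N] [Fintype N]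
    (n : ℕ) (hG : Fintype.card G = n) (hN : Fintype.card N = n)
    (f : G → N)
    (h : ∀ g₁ g₂ g₃ g₄ : G, g₁ + g₂ = g₃ + g₄ →
        f g₁ + f g₂ = f g₃ + f g₄ →
        (g₁ = g₃ ∧ g₂ = g₄) ∨ (g₁ = g₄ ∧ g₂ = g₃)) :
    ∀ a : G, a ≠ 0 → ∀ b : N, ∃! x : G, f (x + a) - f x = b := by
  intro a ha b
  set D : G → N := fun x => f (x + a) - f x with hD
  have hinj : Function.Injective D := by
    intro x y hxy
    simp only [hD] at hxy
    have hsum : (x + a) + y = (y + a) + x := by abel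
    have hf : f (x + a) + f y = f (y + a) + f x :=
      sub_eq_sub_iff_add_eq_add.mp hxy
    rcases h (x + a) y (y + a) x hsum hf with ⟨h1, h2⟩ | ⟨h1, h2⟩
    · exact h2.symm
    · exact absurd (by simpa using h1 : a = 0) ha
  have hbij : Function.Bijective D :=
    (Fintype.bijective_iff_injective_and_card D).mpr ⟨hinj, by rw [hG, hN]⟩
  obtain ⟨x, hx⟩ := hbij.surjective b
  exact ⟨x, hx, fun y hy => hinj (hy.trans hx.symm)⟩
end

section
/- Let p be an odd prime, q = p^k, and suppose f : GF(q) → GF(q) is a planar function. For each r ∈ GF(q), define the orthonormal basis B_r of C^q consisting of the vectors v^{(r)}_c, c ∈ GF(q), whose ℓ-th coordinate is (1/√q)·ω^{Tr(cℓ + r·f(ℓ))} (ℓ ∈ GF(q)), where ω = e^{2πi/p} and Tr is the absolute trace of GF(q) over GF(p). Then together with the standard basis, the bases {B_r : r ∈ GF(q)} form a complete set of q+1 mutually unbiased bases of C^q. -/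
/-!
Write `ψ = e^{2πi Tr(·)/p}`, a primitive additive character of `F`. The inner product of
`v_{r,c}` and `v_{r',c'}` is `q⁻¹ ∑_ℓ ψ((c' - c) ℓ + (r' - r) f(ℓ))`. For `r = r'` this is a
character sum over a line, so it vanishes unless `c = c'`. For `r ≠ r'` the sum has absolute
value `√q`: with `d = c' - c` and `a = r' - r`, its squared norm is
`∑_u ψ(d u) ∑_ℓ ψ(a (f(ℓ + u) - f(ℓ)))`, and planarity makes
`ℓ ↦ f(ℓ + u) - f(ℓ)` a bijection for `u ≠ 0`, so only `u = 0` survives.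
-/

open Finset

namespace PlanarMUB

def IsPlanar {R : Type*} [Ring R] (f : R → R) : Prop :=
  ∀ a : R, a ≠ 0 → ∀ b : R, ∃! x : R, f (x + a) - f x = b

lemma IsPlanar.bijective_sub {R : Type*} [Ring R] {f : R → R} (hf : IsPlanar f) {a : R}
    (ha : a ≠ 0) : Function.Bijective fun x => f (x + a) - f x :=
  (Function.bijective_iff_existsUnique _).mpr (hf a ha)

section Character

variable {R : Type*} [CommRing R] [Fintype R] {ψ : AddChar R ℂ}

lemma sum_addChar_mul_of_ne_zero (hψ : ψ.IsPrimitive) {a : R} (ha : a ≠ 0) :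
    ∑ x, ψ (a * x) = 0 :=
  AddChar.sum_eq_zero_of_ne_one (hψ ha)

lemma sum_addChar_mul_planar_diff (hψ : ψ.IsPrimitive) {f : R → R} (hf : IsPlanar f) {a u : R}
    (ha : a ≠ 0) (hu : u ≠ 0) : ∑ ℓ, ψ (a * (f (ℓ + u) - f ℓ)) = 0 := by
  rw [(hf.bijective_sub hu).sum_comp fun y => ψ (a * y), sum_addChar_mul_of_ne_zero hψ ha]

lemma norm_sum_addChar_planar (hψ : ψ.IsPrimitive) {f : R → R} (hf : IsPlanar f) {a : R}
    (ha : a ≠ 0) (d : R) :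
    ‖∑ ℓ, ψ (d * ℓ + a * f ℓ)‖ = √(Fintype.card R) := by
  set S := ∑ ℓ, ψ (d * ℓ + a * f ℓ)
  have hshift (ℓ : R) : ∑ ℓ', starRingEnd ℂ (ψ (d * ℓ + a * f ℓ)) * ψ (d * ℓ' + a * f ℓ') =
      ∑ u, ψ (d * u) * ψ (a * (f (ℓ + u) - f ℓ)) := by
    refine (Fintype.sum_equiv (Equiv.addLeft ℓ) _ _ fun u => ?_).symm
    rw [← AddChar.map_neg_eq_conj, ← AddChar.map_add_eq_mul, ← AddChar.map_add_eq_mul,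
      Equiv.coe_addLeft]
    congr 1; ring
  have hS : starRingEnd ℂ S * S = Fintype.card R := by
    rw [map_sum, sum_mul_sum, sum_congr rfl fun ℓ _ => hshift ℓ, sum_comm]
    simp_rw [← mul_sum]
    rw [Fintype.sum_eq_single 0 fun u hu => by
      rw [sum_addChar_mul_planar_diff hψ hf ha hu, mul_zero]]
    simp
  have hnormSq : Complex.normSq S = Fintype.card R := by
    exact_mod_cast (Complex.mul_conj S).symm.trans ((mul_comm _ _).trans hS)
  rw [Complex.norm_def, hnormSq]

variable (ψ) in
noncomputable def mubVector (f : R → R) (r c : R) : EuclideanSpace ℂ R :=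
  WithLp.toLp 2 fun ℓ => (1 / Real.sqrt (Fintype.card R) : ℂ) * ψ (c * ℓ + r * f ℓ)

lemma inner_mubVector (f : R → R) (r c r' c' : R) :
    inner ℂ (mubVector ψ f r c) (mubVector ψ f r' c') =
      (Fintype.card R : ℂ)⁻¹ * ∑ ℓ, ψ ((c' - c) * ℓ + (r' - r) * f ℓ) := by
  have hsq : ((√(Fintype.card R) : ℝ) : ℂ) ^ 2 = Fintype.card R := by
    rw [← Complex.ofReal_pow, Real.sq_sqrt (Nat.cast_nonneg _), Complex.ofReal_natCast]
  rw [PiLp.inner_apply, mul_sum]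
  refine sum_congr rfl fun ℓ _ => ?_
  simp only [mubVector, RCLike.inner_apply, map_mul, map_div₀, map_one, Complex.conj_ofReal,
    ← AddChar.map_neg_eq_conj]
  rw [← hsq, show (c' - c) * ℓ + (r' - r) * f ℓ = (c' * ℓ + r' * f ℓ) + -(c * ℓ + r * f ℓ) by ring,
    AddChar.map_add_eq_mul ψ (c' * ℓ + r' * f ℓ)]
  ring

lemma orthonormal_mubVector (hψ : ψ.IsPrimitive) (f : R → R) (r : R) :
    Orthonormal ℂ (mubVector ψ f r) := by
  classical
  rw [orthonormal_iff_ite]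
  intro c c'
  simp only [inner_mubVector, sub_self, zero_mul, add_zero]
  split_ifs with h
  · simp [h]
  · rw [sum_addChar_mul_of_ne_zero hψ (sub_ne_zero.mpr (Ne.symm h)), mul_zero]

lemma norm_inner_mubVector_of_ne (hψ : ψ.IsPrimitive) {f : R → R} (hf : IsPlanar f) {r r' : R}
    (hr : r ≠ r') (c c' : R) :
    ‖inner ℂ (mubVector ψ f r c) (mubVector ψ f r' c')‖ = 1 / √(Fintype.card R) := by
  rw [inner_mubVector, norm_mul, norm_sum_addChar_planar hψ hf (sub_ne_zero.mpr hr.symm),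
    norm_inv, Complex.norm_natCast]
  field_simp
  exact Real.sq_sqrt (Nat.cast_nonneg _)

lemma norm_inner_single_mubVector [DecidableEq R] (f : R → R) (r c ℓ : R) :
    ‖inner ℂ (EuclideanSpace.single ℓ (1 : ℂ)) (mubVector ψ f r c)‖ = 1 / √(Fintype.card R) := by
  simp [EuclideanSpace.inner_single_left, mubVector]

end Character

section Trace

variable (p : ℕ) [Fact p.Prime] (F : Type*) [Field F] [Algebra (ZMod p) F]

noncomputable def traceAddChar : AddChar F ℂ :=
  ZMod.stdAddChar.compAddMonoidHom (Algebra.trace (ZMod p) F).toAddMonoidHom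

lemma traceAddChar_apply (x : F) :
    traceAddChar p F x = Complex.exp (2 * Real.pi * Complex.I *
      ((Algebra.trace (ZMod p) F x).val : ℂ) / (p : ℂ)) :=
  ZMod.toCircle_apply _

lemma isPrimitive_traceAddChar [Fintype F] : (traceAddChar p F).IsPrimitive := by
  refine AddChar.IsPrimitive.of_ne_one (AddChar.ne_one_iff.mpr ?_)
  obtain ⟨x, hx⟩ := Algebra.trace_surjective (ZMod p) F 1
  refine ⟨x, fun h => one_ne_zero (α := ZMod p) ?_⟩
  rw [← hx]
  exact ZMod.injective_stdAddChar (h.trans (AddChar.map_zero_eq_one _).symm)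

end Trace
end PlanarMUB

open PlanarMUB in
theorem planar_function_gives_complete_mub_general
    (p : ℕ) (hp : p.Prime)
    (F : Type*) [Field F] [Fintype F] [DecidableEq F] [Algebra (ZMod p) F]
    (f : F → F)
    (hplanar : ∀ a : F, a ≠ 0 → ∀ b : F, ∃! x : F, f (x + a) - f x = b) :
    (let q : ℕ := Fintype.card F
     let v : F → F → EuclideanSpace ℂ F := fun r c =>
       WithLp.toLp 2 (fun ℓ => (1 / Real.sqrt q : ℂ) *
         Complex.exp (2 * Real.pi * Complex.I *
           ((Algebra.trace (ZMod p) F (c * ℓ + r * f ℓ)).val : ℂ) / (p : ℂ)))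
     -- each B_r is an orthonormal basis,
     (∀ r, Orthonormal ℂ (v r)) ∧
     -- the bases B_r are pairwise mutually unbiased,
     (∀ r r', r ≠ r' → ∀ c c',
        ‖(inner ℂ (v r c) (v r' c') : ℂ)‖ = 1 / Real.sqrt q) ∧
     -- and each B_r is mutually unbiased with the standard basis
     (∀ r c ℓ, ‖(inner ℂ (EuclideanSpace.single ℓ (1 : ℂ)) (v r c) : ℂ)‖ =
        1 / Real.sqrt q)) := by
  have : Fact p.Prime := ⟨hp⟩
  intro q v
  have hv : v = mubVector (traceAddChar p F) f := by
    funext r c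
    simp only [v, mubVector, traceAddChar_apply, q]
  have hψ := isPrimitive_traceAddChar p F
  rw [hv]
  exact ⟨orthonormal_mubVector hψ f, fun r r' hr => norm_inner_mubVector_of_ne hψ hplanar hr,
    norm_inner_single_mubVector f⟩

theorem planar_function_gives_complete_mub
    (p : ℕ) (hp : p.Prime) (hodd : p ≠ 2)
    (F : Type*) [Field F] [Fintype F] [DecidableEq F] [Algebra (ZMod p) F]
    (f : F → F)
    (hplanar : ∀ a : F, a ≠ 0 → ∀ b : F, ∃! x : F, f (x + a) - f x = b) :
    (let q : ℕ := Fintype.card F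
     let v : F → F → EuclideanSpace ℂ F := fun r c =>
       WithLp.toLp 2 (fun ℓ => (1 / Real.sqrt q : ℂ) *
         Complex.exp (2 * Real.pi * Complex.I *
           ((Algebra.trace (ZMod p) F (c * ℓ + r * f ℓ)).val : ℂ) / (p : ℂ)))
     -- each B_r is an orthonormal basis,
     (∀ r, Orthonormal ℂ (v r)) ∧
     -- the bases B_r are pairwise mutually unbiased,
     (∀ r r', r ≠ r' → ∀ c c',
        ‖(inner ℂ (v r c) (v r' c') : ℂ)‖ = 1 / Real.sqrt q) ∧
     -- and each B_r is mutually unbiased with the standard basis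
     (∀ r c ℓ, ‖(inner ℂ (EuclideanSpace.single ℓ (1 : ℂ)) (v r c) : ℂ)‖ =
        1 / Real.sqrt q)) :=
  planar_function_gives_complete_mub_general p hp F f hplanar
end
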